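/- Let Q be a symmetric positive definite real n×n matrix, E = {x ∈ ℝⁿ : xᵀQx ≤ 1}, and let f : ℝⁿ → ℝⁿ be Lipschitz continuous. Then E is an invariant set for the continuous system ẋ(t) = f(x(t)) if and only if f(x)ᵀQx ≤ 0 for all x with xᵀQx = 1. -/

import Mathlib

open Matrix Set

lemma hasDerivAt_quadForm {n : ℕ} (Q : Matrix (Fin n) (Fin n) ℝ) {x : ℝ → Fin n → ℝ} {v : Fin n → ℝ} {t : ℝ}
    (hx : HasDerivAt x v t) :
    HasDerivAt (fun s => x s ⬝ᵥ Q.mulVec (x s)) (v ⬝ᵥ Q.mulVec (x t) + x t ⬝ᵥ Q.mulVec v) t := by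
  have hxi : ∀ i, HasDerivAt (fun s => x s i) (v i) t := fun i => hasDerivAt_pi.mp hx i
  have h : HasDerivAt (fun s => ∑ i, x s i * ∑ j, Q i j * x s j)
      (∑ i, (v i * ∑ j, Q i j * x t j + x t i * ∑ j, Q i j * v j)) t :=
    HasDerivAt.fun_sum fun i _ => ((hxi i).mul (HasDerivAt.fun_sum fun j _ => (hxi j).const_mul _))
  convert h using 1
  simp [Matrix.mulVec, dotProduct, Finset.sum_add_distrib]
  rw [Finset.sum_add_distrib]; rfl

lemma quad_symm {n : ℕ} {Q : Matrix (Fin n) (Fin n) ℝ} (hQsymm : Q.IsSymm) (a b : Fin n → ℝ) :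
    a ⬝ᵥ Q.mulVec b = b ⬝ᵥ Q.mulVec a := by
  rw [Matrix.dotProduct_mulVec, ← Matrix.mulVec_transpose, hQsymm.eq, dotProduct_comm]


lemma dot_le_norm {n : ℕ} (a b : Fin n → ℝ) : a ⬝ᵥ b ≤ n * (‖a‖ * ‖b‖) := by
  calc a ⬝ᵥ b = ∑ i, a i * b i := rfl
    _ ≤ ∑ _i : Fin n, ‖a‖ * ‖b‖ := by
        refine Finset.sum_le_sum fun i _ => ?_
        calc a i * b i ≤ |a i * b i| := le_abs_self _
          _ = |a i| * |b i| := abs_mul _ _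
          _ ≤ ‖a‖ * ‖b‖ := by
              have h1 : |a i| ≤ ‖a‖ := norm_le_pi_norm a i
              have h2 : |b i| ≤ ‖b‖ := norm_le_pi_norm b i
              exact mul_le_mul h1 h2 (abs_nonneg _) (norm_nonneg _)
    _ = n * (‖a‖ * ‖b‖) := by simp [Finset.sum_const, nsmul_eq_mul]

lemma key_est {n : ℕ} {Q : Matrix (Fin n) (Fin n) ℝ} {f : (Fin n → ℝ) → (Fin n → ℝ)}
    {K : NNReal} (hK : LipschitzWith K f)
    (hb : ∀ y : Fin n → ℝ, y ⬝ᵥ Q.mulVec y = 1 → f y ⬝ᵥ Q.mulVec y ≤ 0) :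
    ∃ C : ℝ, 0 ≤ C ∧ ∀ y : Fin n → ℝ, 1 ≤ y ⬝ᵥ Q.mulVec y →
      f y ⬝ᵥ Q.mulVec y ≤ C * ‖y‖ ^ 2 * (y ⬝ᵥ Q.mulVec y - 1) := by
  set T : (Fin n → ℝ) →L[ℝ] (Fin n → ℝ) := LinearMap.toContinuousLinearMap Q.mulVecLin with hT
  refine ⟨n * K * ‖T‖, by positivity, fun y hy => ?_⟩
  set V : ℝ := y ⬝ᵥ Q.mulVec y with hV
  have hV0 : (0:ℝ) < V := lt_of_lt_of_le one_pos hy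
  set r : ℝ := Real.sqrt V with hr
  have hr1 : 1 ≤ r := Real.one_le_sqrt.mpr hy
  have hr0 : 0 < r := lt_of_lt_of_le one_pos hr1
  have hrr : r * r = V := Real.mul_self_sqrt hV0.le
  set z : Fin n → ℝ := r⁻¹ • y with hz
  have hVz : z ⬝ᵥ Q.mulVec z = 1 := by
    rw [hz, Matrix.mulVec_smul, dotProduct_smul, smul_dotProduct]
    simp only [smul_eq_mul, ← hV]
    field_simp
    nlinarith [hrr]
  have hbz := hb z hVz
  have hQz : Q.mulVec z = r⁻¹ • Q.mulVec y := by rw [hz, Matrix.mulVec_smul]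
  have hfzy : f z ⬝ᵥ Q.mulVec y ≤ 0 := by
    have : f z ⬝ᵥ Q.mulVec z = r⁻¹ * (f z ⬝ᵥ Q.mulVec y) := by
      rw [hQz, dotProduct_smul]; rfl
    nlinarith [inv_pos.mpr hr0, this ▸ hbz]
  have hsplit : f y ⬝ᵥ Q.mulVec y = (f y - f z) ⬝ᵥ Q.mulVec y + f z ⬝ᵥ Q.mulVec y := by
    rw [← add_dotProduct, sub_add_cancel]
  have hdot : (f y - f z) ⬝ᵥ Q.mulVec y ≤ n * (‖f y - f z‖ * ‖Q.mulVec y‖) := dot_le_norm _ _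
  have hQy : ‖Q.mulVec y‖ ≤ ‖T‖ * ‖y‖ := T.le_opNorm y
  have hfy : ‖f y - f z‖ ≤ K * ‖y - z‖ := by
    have := hK.dist_le_mul y z
    rwa [dist_eq_norm, dist_eq_norm] at this
  have hyz : ‖y - z‖ = (1 - r⁻¹) * ‖y‖ := by
    have : y - z = (1 - r⁻¹) • y := by rw [hz, sub_smul, one_smul]
    rw [this, norm_smul, Real.norm_eq_abs, abs_of_nonneg]
    have : r⁻¹ ≤ 1 := inv_le_one_of_one_le₀ hr1
    linarith
  have hs : 1 - r⁻¹ ≤ V - 1 := by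
    have hru : r * r⁻¹ = 1 := mul_inv_cancel₀ hr0.ne'
    nlinarith [hrr, (r - 1) * (r ^ 2 + r - 1)]
  have h1s : 0 ≤ 1 - r⁻¹ := by
    have : r⁻¹ ≤ 1 := inv_le_one_of_one_le₀ hr1
    linarith
  calc f y ⬝ᵥ Q.mulVec y ≤ (f y - f z) ⬝ᵥ Q.mulVec y := by rw [hsplit]; linarith
    _ ≤ n * (‖f y - f z‖ * ‖Q.mulVec y‖) := hdot
    _ ≤ n * ((K * ((1 - r⁻¹) * ‖y‖)) * (‖T‖ * ‖y‖)) := by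
        refine mul_le_mul_of_nonneg_left ?_ (by positivity)
        refine mul_le_mul ?_ hQy (norm_nonneg _) (by positivity)
        rw [← hyz]; exact hfy
    _ = (↑n * ↑K * ‖T‖) * ‖y‖ ^ 2 * (1 - r⁻¹) := by ring
    _ ≤ (↑n * ↑K * ‖T‖) * ‖y‖ ^ 2 * (V - 1) := by
        refine mul_le_mul_of_nonneg_left hs (by positivity)


lemma exists_local_sol {n : ℕ} {f : (Fin n → ℝ) → (Fin n → ℝ)} {K : NNReal}
    (hK : LipschitzWith K f) (t₀ : ℝ) (y₀ : Fin n → ℝ) :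
    ∃ α : ℝ → Fin n → ℝ, α t₀ = y₀ ∧ ∀ t ∈ Set.Icc (t₀ - (1 + (K:ℝ))⁻¹) (t₀ + (1 + (K:ℝ))⁻¹),
      HasDerivWithinAt α (f (α t)) (Set.Icc (t₀ - (1 + (K:ℝ))⁻¹) (t₀ + (1 + (K:ℝ))⁻¹)) t := by
  set ε : ℝ := (1 + (K:ℝ))⁻¹ with hε
  have hK0 : (0:ℝ) ≤ K := K.coe_nonneg
  have h1K : (0:ℝ) < 1 + K := by linarith
  have hε0 : 0 < ε := inv_pos.mpr h1K
  set R : NNReal := ‖f y₀‖₊ + 1 with hR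
  set C : NNReal := ‖f y₀‖₊ + K * R with hC
  have hpl : IsPicardLindelof (fun _ y => f y) (tmin := t₀ - ε) (tmax := t₀ + ε)
      ⟨t₀, Set.mem_Icc.mpr ⟨by linarith, by linarith⟩⟩ y₀ R 0 C K :=
    { lipschitzOnWith := fun _ _ => hK.lipschitzOnWith
      continuousOn := fun _ _ => continuousOn_const
      norm_le := by
        intro t _ y hy
        have hd : dist (f y) (f y₀) ≤ K * R :=
          le_trans (hK.dist_le_mul y y₀) (by
            have : dist y y₀ ≤ R := Metric.mem_closedBall.mp hy
            nlinarith)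
        calc ‖f y‖ = dist (f y) 0 := by rw [dist_zero_right]
          _ ≤ dist (f y) (f y₀) + dist (f y₀) 0 := dist_triangle _ _ _
          _ ≤ K * R + ‖f y₀‖ := by rw [dist_zero_right]; linarith
          _ = C := by rw [hC]; push_cast; ring
      mul_max_le := by
        show (C:ℝ) * max ((t₀ + ε) - t₀) (t₀ - (t₀ - ε)) ≤ (R:ℝ) - ((0:NNReal):ℝ)
        rw [add_sub_cancel_left, sub_sub_cancel, max_self, NNReal.coe_zero, sub_zero]
        rw [hε, hC, hR]; push_cast
        rw [← div_eq_mul_inv, div_le_iff₀ h1K]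
        nlinarith [norm_nonneg (f y₀)] }
  exact hpl.exists_eq_forall_mem_Icc_hasDerivWithinAt₀

lemma exists_global_sol {n : ℕ} {f : (Fin n → ℝ) → (Fin n → ℝ)} {K : NNReal}
    (hK : LipschitzWith K f) (x₀ : Fin n → ℝ) :
    ∃ x : ℝ → (Fin n → ℝ), x 0 = x₀ ∧ ∀ t : ℝ, 0 ≤ t → HasDerivAt x (f (x t)) t := by
  set ε : ℝ := (1 + (K:ℝ))⁻¹ with hε
  have hK0 : (0:ℝ) ≤ K := K.coe_nonneg
  have hε0 : 0 < ε := inv_pos.mpr (by linarith)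
  choose F hF1 hF2 using exists_local_sol hK
  set sol : ℕ → ℝ → Fin n → ℝ :=
    fun k => Nat.rec (motive := fun _ => ℝ → Fin n → ℝ) (F 0 x₀)
      (fun m prev => F (((m:ℝ)+1)*ε) (prev (((m:ℝ)+1)*ε))) k with hsol
  have init : sol 0 0 = x₀ := hF1 0 x₀
  have match_ : ∀ m : ℕ, sol (m+1) (((m:ℝ)+1)*ε) = sol m (((m:ℝ)+1)*ε) := fun m => hF1 _ _
  have derivk : ∀ (k : ℕ), ∀ t ∈ Set.Icc ((k:ℝ)*ε - ε) ((k:ℝ)*ε + ε),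
      HasDerivWithinAt (sol k) (f (sol k t)) (Set.Icc ((k:ℝ)*ε - ε) ((k:ℝ)*ε + ε)) t := by
    intro k
    cases k with
    | zero =>
      show ∀ t ∈ Set.Icc (((0:ℕ):ℝ)*ε - ε) (((0:ℕ):ℝ)*ε + ε),
        HasDerivWithinAt (F 0 x₀) (f (F 0 x₀ t)) (Set.Icc (((0:ℕ):ℝ)*ε - ε) (((0:ℕ):ℝ)*ε + ε)) t
      simpa [hε] using hF2 0 x₀
    | succ m => have := hF2 (((m:ℝ)+1)*ε) (sol m (((m:ℝ)+1)*ε)); push_cast; simpa using this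
  -- floor facts
  have hfb : ∀ t : ℝ, 0 ≤ t → ((⌊t/ε⌋₊:ℝ)*ε ≤ t ∧ t < ((⌊t/ε⌋₊:ℝ)+1)*ε) := by
    intro t ht
    constructor
    · exact (le_div_iff₀ hε0).mp (Nat.floor_le (div_nonneg ht hε0.le))
    · exact (div_lt_iff₀ hε0).mp (Nat.lt_floor_add_one _)
  have hfeq : ∀ (k : ℕ) (s : ℝ), (k:ℝ)*ε ≤ s → s < ((k:ℝ)+1)*ε → ⌊s/ε⌋₊ = k := by
    intro k s h1 h2
    have hs0 : 0 ≤ s := le_trans (by positivity) h1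
    rw [Nat.floor_eq_iff (div_nonneg hs0 hε0.le)]
    exact ⟨(le_div_iff₀ hε0).mpr h1, (div_lt_iff₀ hε0).mpr h2⟩
  have agree : ∀ (k : ℕ) (s : ℝ), (k:ℝ)*ε ≤ s → s ≤ ((k:ℝ)+1)*ε → sol ⌊s/ε⌋₊ s = sol k s := by
    intro k s h1 h2
    rcases lt_or_eq_of_le h2 with h | h
    · rw [hfeq k s h1 h]
    · have hfl : ⌊s/ε⌋₊ = k+1 := by
        refine hfeq (k+1) s (by push_cast; linarith) (by push_cast; nlinarith)
      rw [hfl, h]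
      push_cast
      exact match_ k
  have agree0 : ∀ s : ℝ, s < ε → sol ⌊s/ε⌋₊ s = sol 0 s := fun s hs => by
    rw [Nat.floor_eq_zero.mpr ((div_lt_one hε0).mpr hs)]
  refine ⟨fun t => sol ⌊t/ε⌋₊ t, by simpa using init, ?_⟩
  intro t ht
  obtain ⟨hb1, hb2⟩ := hfb t ht
  set k : ℕ := ⌊t/ε⌋₊ with hk
  have hexp : ((k:ℝ)+1)*ε = (k:ℝ)*ε + ε := by ring
  have hint : HasDerivAt (sol k) (f (sol k t)) t :=
    (derivk k t ⟨by linarith, by linarith⟩).hasDerivAt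
      (Icc_mem_nhds (by linarith) (by linarith))
  show HasDerivAt (fun s => sol ⌊s/ε⌋₊ s) (f (sol k t)) t
  by_cases hk0 : k = 0
  · -- on Iio ε we agree with sol 0
    have htlt : t < ε := by
      rw [hk0] at hb2; push_cast at hb2; linarith
    refine hint.congr_of_eventuallyEq ?_
    filter_upwards [Iio_mem_nhds htlt] with s hs
    rw [agree0 s hs, hk0]
  · rcases lt_or_eq_of_le hb1 with hj | hj
    · -- interior of [kε, (k+1)ε]
      refine hint.congr_of_eventuallyEq ?_
      filter_upwards [Ioo_mem_nhds hj hb2] with s hs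
      exact agree k s hs.1.le hs.2.le
    · -- junction : t = kε with k = m+1
      obtain ⟨m, hm⟩ : ∃ m, k = m + 1 :=
        ⟨k - 1, (Nat.succ_pred_eq_of_pos (Nat.pos_of_ne_zero hk0)).symm⟩
      have htm : t = ((m:ℝ)+1)*ε := by rw [hm] at hj; push_cast at hj ⊢; linarith
      have hxt : sol ⌊t/ε⌋₊ t = sol k t := rfl
      have hmatch : sol k t = sol m t := by rw [hm, htm]; exact match_ m
      -- right part
      have hr : HasDerivWithinAt (fun s => sol ⌊s/ε⌋₊ s) (f (sol k t)) (Ici t) t := by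
        refine (hint.hasDerivWithinAt).congr_of_eventuallyEq ?_ hxt
        filter_upwards [Icc_mem_nhdsGE_of_mem (Set.mem_Ico.mpr ⟨le_refl t, hb2⟩)] with s hs
        exact agree k s (hj ▸ hs.1) hs.2
      -- left part
      have hlderiv : HasDerivWithinAt (sol m) (f (sol m t))
          (Set.Icc ((m:ℝ)*ε - ε) ((m:ℝ)*ε + ε)) t :=
        derivk m t ⟨by rw [htm]; nlinarith, by rw [htm]; nlinarith⟩
      have hl : HasDerivWithinAt (fun s => sol ⌊s/ε⌋₊ s) (f (sol m t)) (Iic t) t := by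
        have h1 : HasDerivWithinAt (sol m) (f (sol m t)) (Iic t) t :=
          hlderiv.mono_of_mem_nhdsWithin
            (Icc_mem_nhdsLE_of_mem (Set.mem_Ioc.mpr ⟨by rw [htm]; nlinarith,
              by rw [htm]; nlinarith⟩))
        refine h1.congr_of_eventuallyEq ?_ (hxt.trans hmatch)
        filter_upwards [Icc_mem_nhdsLE_of_mem
          (Set.mem_Ioc.mpr ⟨(by rw [htm]; nlinarith : (m:ℝ)*ε < t), le_refl t⟩)] with s hs
        have hs2 : s ≤ ((m:ℝ)+1)*ε := le_of_le_of_eq hs.2 htm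
        exact agree m s hs.1 hs2
      rw [hmatch] at hr
      have hu := hl.union hr
      rw [Set.Iic_union_Ici] at hu
      rw [hmatch]
      exact hasDerivWithinAt_univ.mp hu

lemma invariance_of_boundary {n : ℕ} {Q : Matrix (Fin n) (Fin n) ℝ} (hQsymm : Q.IsSymm)
    {f : (Fin n → ℝ) → (Fin n → ℝ)} {K : NNReal} (hK : LipschitzWith K f)
    (hb : ∀ y : Fin n → ℝ, y ⬝ᵥ Q.mulVec y = 1 → f y ⬝ᵥ Q.mulVec y ≤ 0)
    (x : ℝ → Fin n → ℝ) (hx : ∀ t : ℝ, 0 ≤ t → HasDerivAt x (f (x t)) t)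
    (hx0 : x 0 ⬝ᵥ Q.mulVec (x 0) ≤ 1) :
    ∀ t : ℝ, 0 ≤ t → x t ⬝ᵥ Q.mulVec (x t) ≤ 1 := by
  intro t₁ ht₁
  by_contra hgt
  push_neg at hgt
  rw [show x t₁ ⬝ᵥ Q.mulVec (x t₁) = (fun t => x t ⬝ᵥ Q.mulVec (x t)) t₁ from rfl] at hgt
  set g : ℝ → ℝ := fun t => x t ⬝ᵥ Q.mulVec (x t) with hg
  have hg' : ∀ t : ℝ, 0 ≤ t → HasDerivAt g (2 * (f (x t) ⬝ᵥ Q.mulVec (x t))) t := by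
    intro t ht
    have h := hasDerivAt_quadForm Q (hx t ht)
    rwa [quad_symm hQsymm (x t) (f (x t)), ← two_mul] at h
  have ht₁0 : 0 < t₁ := by
    rcases lt_or_eq_of_le ht₁ with h | h
    · exact h
    · subst h; exact absurd hgt (not_lt.mpr hx0)
  set S : Set ℝ := {t | t ∈ Set.Icc (0:ℝ) t₁ ∧ g t ≤ 1} with hS
  have hS0 : (0:ℝ) ∈ S := ⟨Set.mem_Icc.mpr ⟨le_refl _, ht₁⟩, hx0⟩
  have hSbdd : BddAbove S := ⟨t₁, fun s hs => hs.1.2⟩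
  set t₀ : ℝ := sSup S with ht₀
  have hSne : S.Nonempty := ⟨0, hS0⟩
  have ht₀0 : 0 ≤ t₀ := le_csSup hSbdd hS0
  have ht₀le : t₀ ≤ t₁ := csSup_le hSne fun s hs => hs.1.2
  have gcont : ∀ t : ℝ, 0 ≤ t → ContinuousAt g t := fun t ht => (hg' t ht).continuousAt
  -- g t₀ ≤ 1
  have hgt₀ : g t₀ ≤ 1 := by
    by_contra h
    push_neg at h
    have hev : ∀ᶠ u in nhds t₀, 1 < g u := (gcont t₀ ht₀0).eventually (eventually_gt_nhds h)
    rw [Metric.eventually_nhds_iff] at hev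
    obtain ⟨δ, hδ, hball⟩ := hev
    obtain ⟨s, hsS, hslt⟩ := exists_lt_of_lt_csSup hSne (sub_lt_self t₀ hδ)
    have hst : s ≤ t₀ := le_csSup hSbdd hsS
    have : dist s t₀ < δ := by rw [Real.dist_eq, abs_sub_lt_iff]; constructor <;> linarith
    exact absurd hsS.2 (not_le.mpr (hball this))
  have ht₀lt : t₀ < t₁ := lt_of_le_of_ne ht₀le (by intro h; rw [h] at hgt₀; exact absurd hgt (not_lt.mpr hgt₀))
  have hup : ∀ t : ℝ, t₀ < t → t ≤ t₁ → 1 < g t := by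
    intro t ht ht'
    by_contra h
    push_neg at h
    exact absurd (le_csSup hSbdd ⟨Set.mem_Icc.mpr ⟨ht₀0.trans ht.le, ht'⟩, h⟩) (not_le.mpr ht)
  have hgt₀1 : 1 ≤ g t₀ := by
    have htd : Filter.Tendsto g (nhdsWithin t₀ (Set.Ioi t₀)) (nhds (g t₀)) :=
      ((gcont t₀ ht₀0).continuousWithinAt).tendsto
    refine ge_of_tendsto htd ?_
    filter_upwards [Ioc_mem_nhdsGT_of_mem (Set.mem_Ico.mpr ⟨le_refl _, ht₀lt⟩)] with u hu
    exact (hup u hu.1 hu.2).le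
  -- bound on ‖x t‖ on [t₀, t₁]
  have xcont : ContinuousOn x (Set.Icc t₀ t₁) := fun t ht =>
    ((hx t (ht₀0.trans ht.1)).continuousAt).continuousWithinAt
  obtain ⟨M, hM⟩ := isCompact_Icc.exists_bound_of_continuousOn xcont
  have hM0 : 0 ≤ M := le_trans (norm_nonneg _) (hM t₀ (Set.mem_Icc.mpr ⟨le_refl _, ht₀le⟩))
  obtain ⟨C, hC0, hCkey⟩ := key_est hK hb
  -- Grönwall
  have hgron := le_gronwallBound_of_liminf_deriv_right_le
    (f := fun t => g t - 1) (f' := fun t => 2 * (f (x t) ⬝ᵥ Q.mulVec (x t)))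
    (δ := 0) (K := 2 * C * M ^ 2) (ε := 0) (a := t₀) (b := t₁)
    (fun t ht => (((hg' t (ht₀0.trans ht.1)).sub_const 1).continuousAt).continuousWithinAt)
    (fun s hs r hr => (((hg' s (ht₀0.trans hs.1)).sub_const 1).hasDerivWithinAt.mono
      (Set.subset_univ _) |>.liminf_right_slope_le hr))
    (by show g t₀ - 1 ≤ (0:ℝ); linarith)
    ?_ t₁ (Set.mem_Icc.mpr ⟨ht₀le, le_refl _⟩)
  · rw [gronwallBound_ε0, zero_mul] at hgron
    have hgron' : g t₁ - 1 ≤ 0 := hgron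
    have hgt' : 1 < g t₁ := hgt
    linarith
  · intro s hs
    have hs0 : 0 ≤ s := ht₀0.trans hs.1
    have hgs1 : 1 ≤ g s := by
      rcases eq_or_lt_of_le hs.1 with h | h
      · rw [← h]; exact hgt₀1
      · exact (hup s h hs.2.le).le
    have hkey : f (x s) ⬝ᵥ Q.mulVec (x s) ≤ C * ‖x s‖ ^ 2 * (g s - 1) := hCkey (x s) hgs1
    have hxM : ‖x s‖ ≤ M := hM s ⟨hs.1, hs.2.le⟩
    have h1 : C * ‖x s‖ ^ 2 * (g s - 1) ≤ C * M ^ 2 * (g s - 1) := by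
      have h2 : ‖x s‖ ^ 2 ≤ M ^ 2 := by nlinarith [norm_nonneg (x s)]
      nlinarith [mul_nonneg (mul_nonneg hC0 (sub_nonneg.mpr h2)) (by linarith : (0:ℝ) ≤ g s - 1)]
    have h3 : f (x s) ⬝ᵥ Q.mulVec (x s) ≤ C * M ^ 2 * (g s - 1) := le_trans hkey h1
    show 2 * (f (x s) ⬝ᵥ Q.mulVec (x s)) ≤ 2 * C * M ^ 2 * (g s - 1) + 0
    linarith


/-- Invariance condition for an ellipsoid `E = {x | xᵀQx ≤ 1}` under a continuous system
`ẋ = f(x)` with `f` Lipschitz: `E` is invariant iff `f(x)ᵀQx ≤ 0` on the boundary. -/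
theorem stmt_11 {n : ℕ} (Q : Matrix (Fin n) (Fin n) ℝ) (hQsymm : Q.IsSymm) (hQpd : Q.PosDef)
    (f : (Fin n → ℝ) → (Fin n → ℝ)) (hf : ∃ K : NNReal, LipschitzWith K f)
    (E : Set (Fin n → ℝ)) (hE : E = {x | x ⬝ᵥ Q.mulVec x ≤ 1}) :
    (∀ x : ℝ → (Fin n → ℝ),
        (∀ t : ℝ, 0 ≤ t → HasDerivAt x (f (x t)) t) →
        x 0 ∈ E → ∀ t : ℝ, 0 ≤ t → x t ∈ E) ↔
      (∀ x : Fin n → ℝ, x ⬝ᵥ Q.mulVec x = 1 → f x ⬝ᵥ Q.mulVec x ≤ 0) := by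
  obtain ⟨K, hK⟩ := hf
  subst hE
  constructor
  · -- invariance → boundary condition
    intro hinv y hy
    by_contra hpos
    push_neg at hpos
    obtain ⟨x, hx0, hx⟩ := exists_global_sol hK y
    have hmem : x 0 ∈ {x : Fin n → ℝ | x ⬝ᵥ Q.mulVec x ≤ 1} := by
      rw [hx0]; exact le_of_eq hy
    have hle : ∀ t : ℝ, 0 ≤ t → x t ⬝ᵥ Q.mulVec (x t) ≤ 1 := fun t ht => hinv x hx hmem t ht
    set g : ℝ → ℝ := fun t => x t ⬝ᵥ Q.mulVec (x t) with hg
    have hg0 : g 0 = 1 := by rw [hg]; simp only; rw [hx0]; exact hy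
    have hd : HasDerivAt g (2 * (f y ⬝ᵥ Q.mulVec y)) 0 := by
      have h := hasDerivAt_quadForm Q (hx 0 (le_refl _))
      rw [hx0] at h
      have h2 : f y ⬝ᵥ Q.mulVec y + y ⬝ᵥ Q.mulVec (f y) = 2 * (f y ⬝ᵥ Q.mulVec y) := by
        rw [quad_symm hQsymm y (f y)]; ring
      rw [← h2]
      convert h using 2 <;> rw [hx0]
    have hIoi : Set.Ioi (0:ℝ) \ {0} = Set.Ioi 0 := Set.diff_singleton_eq_self (by simp)
    have hslope : Filter.Tendsto (slope g 0) (nhdsWithin 0 (Set.Ioi 0))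
        (nhds (2 * (f y ⬝ᵥ Q.mulVec y))) := by
      have h5 := hasDerivWithinAt_iff_tendsto_slope.mp (hd.hasDerivWithinAt (s := Set.Ioi 0))
      rwa [hIoi] at h5
    have hev : ∀ᶠ t in nhdsWithin 0 (Set.Ioi (0:ℝ)), 0 < slope g 0 t :=
      hslope.eventually (eventually_gt_nhds (by linarith))
    obtain ⟨t, hts, htmem⟩ := (hev.and eventually_mem_nhdsWithin).exists
    have ht0 : (0:ℝ) < t := htmem
    rw [slope_def_field] at hts
    have h3 : 0 < g t - g 0 := by
      rcases div_pos_iff.mp hts with ⟨h,_⟩ | ⟨_,h⟩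
      · linarith
      · linarith
    rw [hg0] at h3
    exact absurd (hle t ht0.le) (not_le.mpr (by linarith))
  · intro hb x hx hx0 t ht
    exact invariance_of_boundary hQsymm hK hb x hx hx0 t ht
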